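/- arXiv:1612.01681 — 2 statements merged into one kernel-verified Lean document; each statement's English description precedes it below -/
import Mathlib

section
/- A *-ring R is a p.q.-Baer *-ring if and only if R is a weakly p.q.-Baer *-ring having a unity element. -/
/-!
With a unity `u`, `r_R(xR) = eR` says exactly that `xRy = 0 ↔ (u - e) y = 0`, so `e ↦ u - e`
exchanges the projections of the two definitions. A p.q.-Baer ring has a unity: the projection
generating `r_R(0R) = R` is a left unity, hence self-adjoint and a two-sided unity. The projection
`e` generating `r_R(xR)` is central, since `ae ∈ r_R(xR)` gives `ae = eae` for every `a`, and
applying `star` to this for `star a` gives `ea = eae`. Minimality of `u - e` holds because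
`u - f ∈ r_R(xR) = eR` for every central `f` with `xf = x`.
-/

section LeftUnit

variable {R : Type*} {u : R}

theorem isSelfAdjoint_of_forall_mul_eq [Mul R] [StarMul R] (hu : ∀ y : R, u * y = y) :
    IsSelfAdjoint u :=
  calc star u = u * star u := (hu _).symm
    _ = star (u * star u) := by rw [star_mul, star_star]
    _ = u := by rw [hu, star_star]

theorem mul_eq_self_of_forall_mul_eq [Mul R] [StarMul R] (hu : ∀ y : R, u * y = y) (y : R) :
    y * u = y := by
  rw [← star_star (y * u), star_mul, (isSelfAdjoint_of_forall_mul_eq hu).star_eq, hu, star_star]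

theorem commute_of_forall_mul_eq [Mul R] [StarMul R] (hu : ∀ y : R, u * y = y) (y : R) :
    Commute u y :=
  (hu y).trans (mul_eq_self_of_forall_mul_eq hu y).symm

theorem exists_eq_mul_iff_sub_mul_eq_zero [NonUnitalRing R] (hu : ∀ y : R, u * y = y) {e : R}
    (he : IsIdempotentElem e) (y : R) : (∃ t, y = e * t) ↔ (u - e) * y = 0 := by
  rw [sub_mul, hu, sub_eq_zero]
  constructor
  · rintro ⟨t, rfl⟩
    rw [← mul_assoc, he.eq]
  · intro hy
    exact ⟨y, hy⟩

theorem isStarProjection_sub [NonUnitalRing R] [StarRing R] (hu : ∀ y : R, u * y = y) {e : R}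
    (he : IsStarProjection e) : IsStarProjection (u - e) :=
  he.sub_of_mul_eq_left ⟨hu u, isSelfAdjoint_of_forall_mul_eq hu⟩
    (mul_eq_self_of_forall_mul_eq hu e)

end LeftUnit

/-- `r_R(xR) = eR`. -/
def GeneratesRightAnnihilator {R : Type*} [NonUnitalRing R] (e x : R) : Prop :=
  ∀ y : R, (∀ r : R, x * r * y = 0) ↔ ∃ t : R, y = e * t

namespace GeneratesRightAnnihilator

variable {R : Type*} [NonUnitalRing R] {e x u : R}

theorem mul_eq_self_of_forall_mul_mul_eq_zero (h : GeneratesRightAnnihilator e x)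
    (he : IsIdempotentElem e) {y : R} (hy : ∀ r : R, x * r * y = 0) : e * y = y := by
  obtain ⟨t, rfl⟩ := (h y).1 hy
  rw [← mul_assoc, he.eq]

theorem mul_mul_eq_zero (h : GeneratesRightAnnihilator e x) (he : IsIdempotentElem e) (r : R) :
    x * r * e = 0 :=
  (h e).2 ⟨e, he.eq.symm⟩ r

theorem mul_mul_eq_zero_iff (hu : ∀ y : R, u * y = y) (h : GeneratesRightAnnihilator e x)
    (he : IsIdempotentElem e) (y : R) : (∀ r : R, x * r * y = 0) ↔ (u - e) * y = 0 :=
  (h y).trans (exists_eq_mul_iff_sub_mul_eq_zero hu he y)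

variable [StarRing R]

theorem commute (h : GeneratesRightAnnihilator e x) (he : IsStarProjection e) (a : R) :
    Commute e a := by
  have right_mul (b : R) : e * (b * e) = b * e :=
    h.mul_eq_self_of_forall_mul_mul_eq_zero he.isIdempotentElem fun r => by
      rw [← mul_assoc, mul_assoc x]
      exact h.mul_mul_eq_zero he.isIdempotentElem _
  have hse : star e = e := he.isSelfAdjoint.star_eq
  have left_mul : e * a = e * (a * e) :=
    calc e * a = star (star a * e) := by rw [star_mul, hse, star_star]
      _ = star (e * (star a * e)) := by rw [right_mul]
      _ = e * (a * e) := by rw [star_mul, star_mul, hse, star_star, mul_assoc]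
  rw [Commute, SemiconjBy, left_mul, right_mul]

theorem mul_sub_eq_self (hu : ∀ y : R, u * y = y) (h : GeneratesRightAnnihilator e x)
    (he : IsIdempotentElem e) : x * (u - e) = x := by
  have hxe : x * e = 0 := by
    simpa only [mul_eq_self_of_forall_mul_eq hu] using h.mul_mul_eq_zero he u
  rw [mul_sub, mul_eq_self_of_forall_mul_eq hu, hxe, sub_zero]

theorem sub_mul_eq_self_of_mul_eq (hu : ∀ y : R, u * y = y)
    (h : GeneratesRightAnnihilator e x) (he : IsIdempotentElem e) {f : R}
    (hf : ∀ r : R, Commute f r) (hxf : x * f = x) : (u - e) * f = u - e := by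
  have hxuf : ∀ r : R, x * r * (u - f) = 0 := fun r => by
    rw [mul_sub, mul_eq_self_of_forall_mul_eq hu, mul_assoc, ← (hf r).eq, ← mul_assoc, hxf,
      sub_self]
  have hfe : e * (u - f) = u - f := h.mul_eq_self_of_forall_mul_mul_eq_zero he hxuf
  rw [mul_sub, mul_eq_self_of_forall_mul_eq hu] at hfe
  have hef : e * f = e - (u - f) := by rw [← hfe]; abel
  rw [sub_mul, hu, hef]
  abel

end GeneratesRightAnnihilator

theorem generatesRightAnnihilator_sub {R : Type*} [NonUnitalRing R] [StarRing R] {u e x : R}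
    (hu : ∀ y : R, u * y = y) (he : IsStarProjection e)
    (h : ∀ y : R, (∀ r : R, x * r * y = 0) ↔ e * y = 0) :
    GeneratesRightAnnihilator (u - e) x :=
  fun y => by
    rw [h, exists_eq_mul_iff_sub_mul_eq_zero hu (isStarProjection_sub hu he).isIdempotentElem,
      sub_sub_cancel]

/-- A *-ring `R` is a p.q.-Baer *-ring iff `R` is a weakly p.q.-Baer *-ring with
a unity element. -/
theorem pqBaer_iff_weakly_and_unity (R : Type*) [NonUnitalRing R] [StarRing R] :
    (∀ x : R, ∃ e : R, (e * e = e ∧ star e = e) ∧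
      ∀ y : R, (∀ r : R, x * r * y = 0) ↔ ∃ t : R, y = e * t)
    ↔ ((∀ x : R, ∃ e : R, (e * e = e ∧ star e = e) ∧ (∀ r : R, e * r = r * e) ∧
        x * e = x ∧
        (∀ f : R, (f * f = f ∧ star f = f) → (∀ r : R, f * r = r * f) → x * f = x →
          e * f = e) ∧
        (∀ y : R, (∀ r : R, x * r * y = 0) ↔ e * y = 0)) ∧
      (∃ u : R, ∀ x : R, u * x = x ∧ x * u = x)) := by
  constructor
  · intro h
    obtain ⟨u, ⟨hu_idem, -⟩, h_zero⟩ := h 0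
    have hu (y : R) : u * y = y :=
      GeneratesRightAnnihilator.mul_eq_self_of_forall_mul_mul_eq_zero h_zero hu_idem fun r => by
        rw [zero_mul, zero_mul]
    refine ⟨fun x => ?_, u, fun y => ⟨hu y, mul_eq_self_of_forall_mul_eq hu y⟩⟩
    obtain ⟨e, he, hx⟩ := h x
    have he : IsStarProjection e := isStarProjection_iff'.2 he
    have hx : GeneratesRightAnnihilator e x := hx
    exact ⟨u - e, isStarProjection_iff'.1 (isStarProjection_sub hu he),
      fun r => (commute_of_forall_mul_eq hu r).sub_left (hx.commute he r),
      hx.mul_sub_eq_self hu he.isIdempotentElem,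
      fun f _ hf hxf => hx.sub_mul_eq_self_of_mul_eq hu he.isIdempotentElem hf hxf,
      hx.mul_mul_eq_zero_iff hu he.isIdempotentElem⟩
  · rintro ⟨hw, u, hu⟩ x
    obtain ⟨e, he, -, -, -, hx⟩ := hw x
    have hu (y : R) : u * y = y := (hu y).1
    have he : IsStarProjection e := isStarProjection_iff'.2 he
    exact ⟨u - e, isStarProjection_iff'.1 (isStarProjection_sub hu he),
      generatesRightAnnihilator_sub hu he hx⟩
end

section
/- Let R be a *-ring, K an integral domain with involution, R a *-algebra over K, and R₁ = R ⊕ K its unitification. For x ∈ R and a projection e ∈ R: e is the central cover of x in R (i.e., e is central, xe = x, and for all y ∈ R, xRy = 0 iff ey = 0) if and only if (e,0) is the central cover of (x,0) in R₁. -/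
/-!
When `e` is a central idempotent with `x * e = x`, we have `x r y = x r (e y)` and `e y = e (e y)`,
so the annihilator condition of a central cover only has to be checked on `e S`. In the
unitization `e * y` lies in `R`, and for `y ∈ R` the condition reads the same in `R` and in `R₁`:
the extra products `x (λ, 0) y = λ • x y = λ • x e y` already lie in `K • x R y`.
-/

/-- A central cover, without the requirement that `e` be a projection. -/
def IsCentralCover {S : Type*} [Mul S] [Zero S] (x e : S) : Prop :=
  (∀ r : S, e * r = r * e) ∧ x * e = x ∧ ∀ y : S, (∀ r : S, x * r * y = 0) ↔ e * y = 0

section SemigroupWithZero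

variable {S : Type*} [SemigroupWithZero S] {x e : S}

theorem forall_mul_mul_eq_zero_iff_mul_left (hc : ∀ r : S, e * r = r * e) (hxe : x * e = x)
    (y : S) : (∀ r : S, x * r * (e * y) = 0) ↔ ∀ r : S, x * r * y = 0 := by
  refine forall_congr' fun r => ?_
  rw [← mul_assoc, mul_assoc x, ← hc, ← mul_assoc, hxe]

theorem IsCentralCover.of_forall_mul_left (hc : ∀ r : S, e * r = r * e) (hee : e * e = e)
    (hxe : x * e = x) (hann : ∀ y : S, (∀ r : S, x * r * (e * y) = 0) ↔ e * (e * y) = 0) :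
    IsCentralCover x e := by
  refine ⟨hc, hxe, fun y => ?_⟩
  rw [← forall_mul_mul_eq_zero_iff_mul_left hc hxe, hann, ← mul_assoc, hee]

end SemigroupWithZero

namespace Unitization

section NonUnitalNonAssocSemiring

variable {K R : Type*} [CommSemiring K] [NonUnitalNonAssocSemiring R] [Module K R]

theorem inr_mul_eq (a : R) (y : Unitization K R) :
    (a : Unitization K R) * y = ↑(y.fst • a + a * y.snd) := by
  induction y with
  | inl_add_inr μ b => simp [mul_add, inr_mul_inl]

theorem forall_inr_mul_comm_iff (e : R) :
    (∀ r : Unitization K R, (e : Unitization K R) * r = r * e) ↔ ∀ r : R, e * r = r * e := by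
  refine ⟨fun h r => inr_injective (R := K) ?_, fun h r => ?_⟩
  · rw [inr_mul, inr_mul, h]
  · induction r with
    | inl_add_inr μ b => simp [mul_add, add_mul, inr_mul_inl, inl_mul_inr, ← inr_mul, h b]

end NonUnitalNonAssocSemiring

section NonUnitalSemiring

variable {K R : Type*} [CommSemiring K] [NonUnitalSemiring R] [Module K R]
  [IsScalarTower K R R] [SMulCommClass K R R]

theorem forall_inr_mul_mul_inr_eq_zero_iff (x y : R) :
    (∀ r : Unitization K R, (x : Unitization K R) * r * y = 0) ↔
      x * y = 0 ∧ ∀ r : R, x * r * y = 0 := by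
  refine ⟨fun h => ⟨?_, fun r => ?_⟩, fun ⟨hxy, h⟩ r => ?_⟩
  · exact inr_injective (R := K) (by simpa using h 1)
  · exact inr_injective (R := K) (by simpa using h r)
  · induction r with
    | inl_add_inr μ b => simp [mul_add, add_mul, inr_mul_inl, ← inr_mul, hxy, h b]

theorem forall_inr_mul_mul_inr_eq_zero_iff_of_mul_eq {x e : R} (hxe : x * e = x) (y : R) :
    (∀ r : Unitization K R, (x : Unitization K R) * r * y = 0) ↔ ∀ r : R, x * r * y = 0 := by
  rw [forall_inr_mul_mul_inr_eq_zero_iff, and_iff_right_of_imp fun h => by simpa [hxe] using h e]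

theorem isCentralCover_inr_iff {x e : R} (hee : e * e = e) :
    IsCentralCover (x : Unitization K R) e ↔ IsCentralCover x e := by
  have hcond (hxe : x * e = x) (y : R) :
      ((∀ r : Unitization K R, (x : Unitization K R) * r * y = 0) ↔
          (e : Unitization K R) * y = 0) ↔ ((∀ r : R, x * r * y = 0) ↔ e * y = 0) := by
    rw [forall_inr_mul_mul_inr_eq_zero_iff_of_mul_eq hxe, ← inr_mul, ← inr_zero, inr_inj]
  constructor
  · rintro ⟨hc, hxe, hann⟩
    rw [forall_inr_mul_comm_iff] at hc
    rw [← inr_mul, inr_inj] at hxe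
    exact ⟨hc, hxe, fun y => (hcond hxe y).1 (hann y)⟩
  · rintro ⟨hc, hxe, hann⟩
    refine .of_forall_mul_left ((forall_inr_mul_comm_iff e).2 hc) (by rw [← inr_mul, hee])
      (by rw [← inr_mul, hxe]) fun y => ?_
    obtain ⟨y', hy'⟩ : ∃ y' : R, (e : Unitization K R) * y = y' := ⟨_, inr_mul_eq e y⟩
    rw [hy']
    exact (hcond hxe _).2 (hann _)

end NonUnitalSemiring

end Unitization

theorem central_cover_unitization_general (R K : Type*) [NonUnitalRing R] [StarRing R]
    [CommRing K]
    [Module K R] [IsScalarTower K R R] [SMulCommClass K R R]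
    (x e : R) (he : e * e = e ∧ star e = e) :
    ((∀ r : R, e * r = r * e) ∧ x * e = x ∧
      ∀ y : R, (∀ r : R, x * r * y = 0) ↔ e * y = 0)
    ↔ ((∀ r : Unitization K R,
          (Unitization.inr e : Unitization K R) * r = r * Unitization.inr e) ∧
        (Unitization.inr x : Unitization K R) * Unitization.inr e = Unitization.inr x ∧
        ∀ y : Unitization K R,
          (∀ r : Unitization K R, (Unitization.inr x : Unitization K R) * r * y = 0) ↔
            (Unitization.inr e : Unitization K R) * y = 0) :=
  (Unitization.isCentralCover_inr_iff he.1).symm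

/-- For `x ∈ R` and a projection `e ∈ R`: `e` is the central cover of `x` in `R` iff
`(e, 0)` is the central cover of `(x, 0)` in the unitification `R₁ = R ⊕ K`. -/
theorem central_cover_unitization (R K : Type*) [NonUnitalRing R] [StarRing R]
    [CommRing K] [IsDomain K] [StarRing K]
    [Module K R] [IsScalarTower K R R] [SMulCommClass K R R] [StarModule K R]
    (x e : R) (he : e * e = e ∧ star e = e) :
    ((∀ r : R, e * r = r * e) ∧ x * e = x ∧
      ∀ y : R, (∀ r : R, x * r * y = 0) ↔ e * y = 0)
    ↔ ((∀ r : Unitization K R,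
          (Unitization.inr e : Unitization K R) * r = r * Unitization.inr e) ∧
        (Unitization.inr x : Unitization K R) * Unitization.inr e = Unitization.inr x ∧
        ∀ y : Unitization K R,
          (∀ r : Unitization K R, (Unitization.inr x : Unitization K R) * r * y = 0) ↔
            (Unitization.inr e : Unitization K R) * y = 0) :=
  central_cover_unitization_general R K x e he
end
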